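/- If u and v are true twins in a graph G (i.e., N[u] = N[v]) and S is a general position set of G with u ∈ S, then S ∪ {v} is also a general position set of G. -/

import Mathlib

open SimpleGraph

variable {V : Type*}

/-- A walk is a shortest path if it is a path and its length equals the distance
between its endpoints. -/
def SimpleGraph.IsShortestPath (G : SimpleGraph V) {u v : V} (p : G.Walk u v) : Prop :=
  p.IsPath ∧ p.length = G.dist u v

/-- `S` is a general position set: no three vertices of `S` lie on a common shortest path. -/
def SimpleGraph.IsGPSet (G : SimpleGraph V) (S : Set V) : Prop :=
  ∀ ⦃u v : V⦄ (p : G.Walk u v), G.IsShortestPath p →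
    ∀ x ∈ S, ∀ y ∈ S, ∀ z ∈ S, x ≠ y → x ≠ z → y ≠ z →
      ¬ (x ∈ p.support ∧ y ∈ p.support ∧ z ∈ p.support)

/-- `u` and `v` are `S`-visible: some shortest `u,v`-path has no internal vertex in `S`. -/
def SimpleGraph.SVisible (G : SimpleGraph V) (S : Set V) (u v : V) : Prop :=
  ∃ p : G.Walk u v, G.IsShortestPath p ∧ ∀ w ∈ p.support, w ≠ u → w ≠ v → w ∉ S

/-- `S` is a mutual-visibility set. -/
def SimpleGraph.IsMVSet (G : SimpleGraph V) (S : Set V) : Prop :=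
  ∀ u ∈ S, ∀ v ∈ S, u ≠ v → G.SVisible S u v

/-- `S` is a total mutual-visibility set. -/
def SimpleGraph.IsTotalMVSet (G : SimpleGraph V) (S : Set V) : Prop :=
  ∀ u v : V, u ≠ v → G.SVisible S u v

/-- `S` is an outer mutual-visibility set. -/
def SimpleGraph.IsOuterMVSet (G : SimpleGraph V) (S : Set V) : Prop :=
  G.IsMVSet S ∧ ∀ u ∈ S, ∀ v ∉ S, u ≠ v → G.SVisible S u v

/-- The mutual-visibility number `μ(G)`. -/
noncomputable def SimpleGraph.mutualVisibilityNumber (G : SimpleGraph V) [Fintype V] : ℕ :=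
  sSup {k | ∃ S : Finset V, G.IsMVSet ↑S ∧ S.card = k}

/-- The total mutual-visibility number `μ_t(G)`. -/
noncomputable def SimpleGraph.totalMutualVisibilityNumber (G : SimpleGraph V) [Fintype V] : ℕ :=
  sSup {k | ∃ S : Finset V, G.IsTotalMVSet ↑S ∧ S.card = k}

/-- The outer mutual-visibility number `μ_o(G)`. -/
noncomputable def SimpleGraph.outerMutualVisibilityNumber (G : SimpleGraph V) [Fintype V] : ℕ :=
  sSup {k | ∃ S : Finset V, G.IsOuterMVSet ↑S ∧ S.card = k}

/-- The general position number `gp(G)`. -/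
noncomputable def SimpleGraph.gpNumber (G : SimpleGraph V) [Fintype V] : ℕ :=
  sSup {k | ∃ S : Finset V, G.IsGPSet ↑S ∧ S.card = k}

/-- The double graph `D(G)`: two copies of each vertex, `(u, b)` adjacent to `(v, c)`
iff `u` adjacent to `v` in `G`. -/
def SimpleGraph.doubleGraph (G : SimpleGraph V) : SimpleGraph (V × Bool) where
  Adj x y := G.Adj x.1 y.1
  symm := ⟨fun _ _ h => G.adj_symm h⟩
  loopless := ⟨fun x h => G.irrefl (v := x.1) h⟩

/-- The Mycielskian `M(G)`: `some (u, false)` are the original vertices, `some (u, true)`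
their copies, and `none` is the apex vertex `v*`. -/
def SimpleGraph.mycielskian (G : SimpleGraph V) : SimpleGraph (Option (V × Bool)) where
  Adj x y := match x, y with
    | some (u, false), some (v, false) => G.Adj u v
    | some (u, false), some (v, true) => G.Adj u v
    | some (u, true), some (v, false) => G.Adj u v
    | some (_, true), none => True
    | none, some (_, true) => True
    | _, _ => False
  symm := by
    constructor
    rintro (_ | ⟨u, (_|_)⟩) (_ | ⟨v, (_|_)⟩) h <;>
      first
        | exact h
        | exact G.adj_symm h
  loopless := by
    constructor
    rintro (_ | ⟨u, (_|_)⟩) h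
    · exact h
    · exact G.irrefl (v := u) h
    · exact h

/-!
Swapping two true twins `u` and `v` is an automorphism of `G`; hence it maps shortest paths to
shortest paths, and `d(u, w) = d(v, w)` for every other vertex `w`. Along a shortest path the
vertices at positions `i` and `j` are at distance `|i - j|`, so as `d(u, v) = 1` a parity argument
shows that a shortest path through `u` and `v` has no further vertex. Now if a shortest path
passed through `v` and two other vertices `x, y ∈ S`, then either one of them is `u`, which was
just excluded, or the swap gives a shortest path through `x, y, u ∈ S`.
-/

namespace SimpleGraph

variable {W : Type*} {G : SimpleGraph V} {G' : SimpleGraph W}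

theorem Hom.edist_map_le (f : G →g G') (a b : V) : G'.edist (f a) (f b) ≤ G.edist a b := by
  by_cases h : G.edist a b = ⊤
  · simp [h]
  obtain ⟨p, hp⟩ := exists_walk_of_edist_ne_top h
  rw [← hp, ← p.length_map f]
  exact edist_le _

theorem Iso.dist_map (e : G ≃g G') (a b : V) : G'.dist (e a) (e b) = G.dist a b := by
  have hle := Hom.edist_map_le e.symm.toHom (e a) (e b)
  simp only [RelHom.coeFn_mk, RelIso.coe_fn_toEquiv, RelIso.symm_apply_apply] at hle
  exact congrArg ENat.toNat (le_antisymm (Hom.edist_map_le e.toHom a b) hle)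

theorem IsShortestPath.map_iso {a b : V} {p : G.Walk a b} (hp : G.IsShortestPath p)
    (e : G ≃g G') : G'.IsShortestPath (p.map e.toHom) := by
  have hlen : (p.map e.toHom).length = G'.dist (e a) (e b) := by
    rw [Walk.length_map, e.dist_map, hp.2]
  exact ⟨Walk.isPath_of_length_eq_dist _ hlen, hlen⟩

theorem Walk.dist_getVert_getVert_of_length_eq_dist {a b : V} {p : G.Walk a b}
    (hp : p.length = G.dist a b) {i j : ℕ} (hij : i ≤ j) (hj : j ≤ p.length) :
    G.dist (p.getVert i) (p.getVert j) = j - i := by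
  have h := length_eq_dist_of_subwalk hp
    (((p.drop i).isSubwalk_take (j - i)).trans (p.isSubwalk_drop i))
  rw [take_length, drop_length, drop_getVert, Nat.add_sub_cancel' hij] at h
  omega

theorem Walk.dist_getVert_getVert_eq_max_sub_min {a b : V} {p : G.Walk a b}
    (hp : p.length = G.dist a b) {i j : ℕ} (hi : i ≤ p.length) (hj : j ≤ p.length) :
    G.dist (p.getVert i) (p.getVert j) = max i j - min i j := by
  rcases le_total i j with hij | hji
  · rw [p.dist_getVert_getVert_of_length_eq_dist hp hij hj]; omega
  · rw [dist_comm, p.dist_getVert_getVert_of_length_eq_dist hp hji hi]; omega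

theorem IsGPSet.insert {S : Set V} {v : V} (hS : G.IsGPSet S)
    (hv : ∀ ⦃a b : V⦄ (p : G.Walk a b), G.IsShortestPath p → v ∈ p.support →
      ∀ x ∈ S, ∀ y ∈ S, x ≠ y → x ≠ v → y ≠ v → x ∈ p.support → y ∈ p.support → False) :
    G.IsGPSet (insert v S) := by
  rintro a b p hp x (rfl | hx) y (rfl | hy) z (rfl | hz) hxy hxz hyz ⟨hxp, hyp, hzp⟩
  · exact hxy rfl
  · exact hxy rfl
  · exact hxz rfl
  · exact hv p hp hxp y hy z hz hyz hxy.symm hxz.symm hyp hzp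
  · exact hyz rfl
  · exact hv p hp hyp x hx z hz hxz hxy hyz.symm hxp hzp
  · exact hv p hp hzp x hx y hy hxy hxz hyz hxp hyp
  · exact hS p hp x hx y hy z hz hxy hxz hyz ⟨hxp, hyp, hzp⟩

section TrueTwins

variable {u v : V} (htwin : insert u (G.neighborSet u) = insert v (G.neighborSet v))
include htwin

theorem adj_iff_adj_of_insert_neighborSet_eq {w : V} (hwu : w ≠ u) (hwv : w ≠ v) :
    G.Adj u w ↔ G.Adj v w := by
  simpa [hwu, hwv] using Set.ext_iff.mp htwin w

theorem adj_of_insert_neighborSet_eq (huv : u ≠ v) : G.Adj u v := by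
  simpa [huv.symm] using (Set.ext_iff.mp htwin v).2

def twinSwap [DecidableEq V] : G ≃g G where
  toEquiv := Equiv.swap u v
  map_rel_iff' := by
    suffices h : ∀ a b, G.Adj a b → G.Adj (Equiv.swap u v a) (Equiv.swap u v b) from
      fun {a b} => ⟨fun hab => by simpa using h _ _ hab, h a b⟩
    intro a b hab
    simp only [Equiv.swap_apply_def]
    split_ifs <;> simp_all [adj_iff_adj_of_insert_neighborSet_eq htwin, adj_comm]

@[simp]
theorem twinSwap_apply [DecidableEq V] (w : V) : twinSwap htwin w = Equiv.swap u v w := rfl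

theorem dist_eq_dist_of_insert_neighborSet_eq {w : V} (hwu : w ≠ u) (hwv : w ≠ v) :
    G.dist u w = G.dist v w := by
  classical
  have h := (twinSwap htwin).dist_map u w
  rwa [twinSwap_apply, twinSwap_apply, Equiv.swap_apply_left,
    Equiv.swap_apply_of_ne_of_ne hwu hwv, eq_comm] at h

theorem eq_or_eq_of_mem_support_of_insert_neighborSet_eq (huv : u ≠ v) {a b w : V}
    {p : G.Walk a b} (hp : p.length = G.dist a b) (hu : u ∈ p.support) (hv : v ∈ p.support)
    (hw : w ∈ p.support) : w = u ∨ w = v := by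
  by_contra! hne
  obtain ⟨i, rfl, hi⟩ := Walk.mem_support_iff_exists_getVert.mp hu
  obtain ⟨j, rfl, hj⟩ := Walk.mem_support_iff_exists_getVert.mp hv
  obtain ⟨k, rfl, hk⟩ := Walk.mem_support_iff_exists_getVert.mp hw
  have hij := dist_eq_one_iff_adj.mpr (adj_of_insert_neighborSet_eq htwin huv)
  have hik := dist_eq_dist_of_insert_neighborSet_eq htwin hne.1 hne.2
  rw [p.dist_getVert_getVert_eq_max_sub_min hp hi hj] at hij
  rw [p.dist_getVert_getVert_eq_max_sub_min hp hi hk,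
    p.dist_getVert_getVert_eq_max_sub_min hp hj hk] at hik
  omega

end TrueTwins

end SimpleGraph

theorem true_twins_gp_general (G : SimpleGraph V) (u v : V)
    (htwin : insert u (G.neighborSet u) = insert v (G.neighborSet v)) (S : Set V)
    (hS : G.IsGPSet S) (hu : u ∈ S) :
    G.IsGPSet (S ∪ {v}) := by
  classical
  rw [Set.union_singleton]
  refine hS.insert fun a b p hp hvp x hx y hy hxy hxv hyv hxp hyp => ?_
  by_cases hxu : x = u
  · subst hxu
    exact (eq_or_eq_of_mem_support_of_insert_neighborSet_eq htwin hxv hp.2 hxp hvp hyp).elim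
      (hxy ·.symm) hyv
  by_cases hyu : y = u
  · subst hyu
    exact (eq_or_eq_of_mem_support_of_insert_neighborSet_eq htwin hyv hp.2 hyp hvp hxp).elim
      hxy hxv
  set σ := twinSwap htwin
  have hσ : ∀ w ∈ p.support, σ w ∈ (p.map σ.toHom).support := fun w hw => by
    rw [Walk.support_map]
    exact List.mem_map_of_mem hw
  have hσx : σ x = x := Equiv.swap_apply_of_ne_of_ne hxu hxv
  have hσy : σ y = y := Equiv.swap_apply_of_ne_of_ne hyu hyv
  have hσv : σ v = u := Equiv.swap_apply_right u v
  exact hS _ (hp.map_iso σ) x hx y hy u hu hxy hxu hyu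
    ⟨hσx ▸ hσ x hxp, hσy ▸ hσ y hyp, hσv ▸ hσ v hvp⟩

theorem true_twins_gp (G : SimpleGraph V) (hconn : G.Connected) (u v : V)
    (htwin : insert u (G.neighborSet u) = insert v (G.neighborSet v)) (S : Set V)
    (hS : G.IsGPSet S) (hu : u ∈ S) :
    G.IsGPSet (S ∪ {v}) :=
  true_twins_gp_general G u v htwin S hS hu
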